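/- For every set of structures 𝒮 and every integer k ≥ 1, 𝕄_k(ef*(𝒮)) = 𝕄_k(ef1*(𝒮)): the k-multiset color abstraction of the closure of 𝒮 under external fusions equals the k-multiset color abstraction of the closure of 𝒮 under single-pair external fusions. -/
import Mathlib


/-!
Common definitions for the formalization of
"The Treewidth Boundedness Problem for an Inductive Separation Logic of Relations".
-/

namespace SLRTW

/-! ### Relational structures over a fixed universe `V` -/

/-- A structure over the relational signature given by `Rel`, `ar` with universe `V`:
each relation symbol is interpreted as a finite set of tuples, and only finitely many
relation symbols have a nonempty interpretation. -/
structure Str (Rel : Type) (ar : Rel → ℕ) (V : Type) where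
  interp : ∀ r : Rel, Set (Fin (ar r) → V)
  finite_interp : ∀ r, (interp r).Finite
  finite_active : {r : Rel | interp r ≠ ∅}.Finite

/-- Formulas of the separation logic of relations, over relation symbols `Rel` (with
arities `ar`) and predicate symbols `Pr` (with arities `pa`).  Variables are natural
numbers; by convention, the parameters of a predicate of arity `n` are `0, …, n-1`. -/
inductive SLR (Rel : Type) (ar : Rel → ℕ) (Pr : Type) (pa : Pr → ℕ) : Type where
  | emp : SLR Rel ar Pr pa
  | eq (x y : ℕ) : SLR Rel ar Pr pa
  | ne (x y : ℕ) : SLR Rel ar Pr pa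
  | rel (r : Rel) (a : Fin (ar r) → ℕ) : SLR Rel ar Pr pa
  | pred (A : Pr) (a : Fin (pa A) → ℕ) : SLR Rel ar Pr pa
  | star (φ ψ : SLR Rel ar Pr pa) : SLR Rel ar Pr pa
  | ex (x : ℕ) (φ : SLR Rel ar Pr pa) : SLR Rel ar Pr pa

/-- An RGB color scheme: a partition of the set of colors `𝒫(Rel)` into red, green
and blue colors, such that any two blue colors intersect, every green color intersects
every blue color, and every red color is disjoint from some blue color. -/
structure RGB (Rel : Type) where
  red : Set (Set Rel)
  green : Set (Set Rel)
  blue : Set (Set Rel)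
  cover : ∀ C : Set Rel, C ∈ red ∨ C ∈ green ∨ C ∈ blue
  red_green : red ∩ green = ∅
  red_blue : red ∩ blue = ∅
  green_blue : green ∩ blue = ∅
  blue_blue_meet : ∀ C1 ∈ blue, ∀ C2 ∈ blue, (C1 ∩ C2).Nonempty
  green_blue_meet : ∀ C1 ∈ green, ∀ C2 ∈ blue, (C1 ∩ C2).Nonempty
  red_sep : ∀ C1 ∈ red, ∃ C2 ∈ blue, C1 ∩ C2 = ∅

section Defs1

variable {Rel : Type} {ar : Rel → ℕ} {V : Type} {Pr : Type} {pa : Pr → ℕ}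

/-- The support of a structure: the elements occurring in some tuple. -/
def Str.supp (S : Str Rel ar V) : Set V :=
  { u | ∃ (r : Rel) (t : Fin (ar r) → V), t ∈ S.interp r ∧ ∃ i, t i = u }

/-- Two structures are locally disjoint iff their interpretations are pointwise disjoint. -/
def LocDisj (S1 S2 : Str Rel ar V) : Prop :=
  ∀ r, S1.interp r ∩ S2.interp r = ∅

/-- Composition of structures (pointwise union of the interpretations). -/
def Str.comp (S1 S2 : Str Rel ar V) : Str Rel ar V where
  interp r := S1.interp r ∪ S2.interp r
  finite_interp r := (S1.finite_interp r).union (S2.finite_interp r)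
  finite_active := by
    refine (S1.finite_active.union S2.finite_active).subset ?_
    intro r hr
    simp only [Set.mem_setOf_eq, Set.mem_union, ne_eq] at hr ⊢
    rw [Set.union_empty_iff] at hr
    tauto

/-- Composition of a finite family of structures. -/
def bigComp {n : ℕ} (Ss : Fin n → Str Rel ar V) : Str Rel ar V where
  interp r := ⋃ i, (Ss i).interp r
  finite_interp r := Set.finite_iUnion fun i => (Ss i).finite_interp r
  finite_active := by
    refine (Set.finite_iUnion fun i => (Ss i).finite_active).subset ?_
    intro r hr
    simp only [Set.mem_setOf_eq, ne_eq, Set.iUnion_eq_empty, Set.mem_iUnion] at hr ⊢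
    push_neg at hr
    obtain ⟨i, hi⟩ := hr
    exact ⟨i, Set.nonempty_iff_ne_empty.mp hi⟩

/-- A tree decomposition of a structure: a finite tree whose nodes carry finite bags of
elements, covering every tuple, and such that the set of nodes containing any given
support element is nonempty and connected. -/
structure TreeDecomp (S : Str Rel ar V) where
  ι : Type
  instFin : Fintype ι
  G : SimpleGraph ι
  isTree : G.IsTree
  bag : ι → Finset V
  bag_cover : ∀ (r : Rel), ∀ t ∈ S.interp r, ∃ n : ι, ∀ i, t i ∈ bag n
  bag_conn : ∀ u ∈ S.supp, (SimpleGraph.induce {n : ι | u ∈ bag n} G).Connected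

attribute [instance] TreeDecomp.instFin

/-- The width of a tree decomposition: maximal bag size minus one. -/
def TreeDecomp.width {S : Str Rel ar V} (T : TreeDecomp S) : ℕ :=
  (Finset.univ.sup fun n : T.ι => (T.bag n).card) - 1

/-- The treewidth of a structure: the minimal width of a tree decomposition. -/
noncomputable def tw (S : Str Rel ar V) : ℕ :=
  sInf { w | ∃ T : TreeDecomp S, T.width = w }

/-- A set of structures is treewidth-bounded iff the treewidths of its members are
bounded. -/
def TWB (𝒮 : Set (Str Rel ar V)) : Prop :=
  ∃ k : ℕ, ∀ S ∈ 𝒮, tw S ≤ k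

/-- The supremum of the treewidths of a set of structures (in `ℕ∞`). -/
noncomputable def twSet (𝒮 : Set (Str Rel ar V)) : ℕ∞ :=
  ⨆ S ∈ 𝒮, (tw S : ℕ∞)

namespace SLR

/-- Free variables of a formula. -/
def fv : SLR Rel ar Pr pa → Set ℕ
  | .emp => ∅
  | .eq x y => {x, y}
  | .ne x y => {x, y}
  | .rel _ a => Set.range a
  | .pred _ a => Set.range a
  | .star φ ψ => φ.fv ∪ ψ.fv
  | .ex x φ => φ.fv \ {x}

/-- All variables (free or bound) occurring in a formula. -/
def vars : SLR Rel ar Pr pa → Set ℕ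
  | .emp => ∅
  | .eq x y => {x, y}
  | .ne x y => {x, y}
  | .rel _ a => Set.range a
  | .pred _ a => Set.range a
  | .star φ ψ => φ.vars ∪ ψ.vars
  | .ex x φ => insert x φ.vars

/-- Predicate-free formulas. -/
def PredFree : SLR Rel ar Pr pa → Prop
  | .pred _ _ => False
  | .star φ ψ => φ.PredFree ∧ ψ.PredFree
  | .ex _ φ => φ.PredFree
  | _ => True

/-- Quantifier- and predicate-free (qpf) formulas. -/
def QPF : SLR Rel ar Pr pa → Prop
  | .pred _ _ => False
  | .ex _ _ => False
  | .star φ ψ => φ.QPF ∧ ψ.QPF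
  | _ => True

/-- Formulas containing only relation atoms. -/
def RelOnly : SLR Rel ar Pr pa → Prop
  | .rel _ _ => True
  | .star φ ψ => φ.RelOnly ∧ ψ.RelOnly
  | _ => False

/-- Formulas containing only equality atoms (and `emp`). -/
def EqOnly : SLR Rel ar Pr pa → Prop
  | .emp => True
  | .eq _ _ => True
  | .star φ ψ => φ.EqOnly ∧ ψ.EqOnly
  | _ => False

/-- Equality-free formulas: no equality atom and no predicate atom in which the same
variable occurs twice. -/
def EqFreeF : SLR Rel ar Pr pa → Prop
  | .eq _ _ => False
  | .pred _ a => Function.Injective a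
  | .star φ ψ => φ.EqFreeF ∧ ψ.EqFreeF
  | .ex _ φ => φ.EqFreeF
  | _ => True

/-- The number of predicate atoms occurring in a formula. -/
def npred : SLR Rel ar Pr pa → ℕ
  | .pred _ _ => 1
  | .star φ ψ => φ.npred + ψ.npred
  | .ex _ φ => φ.npred
  | _ => 0

/-- The number of relation atoms occurring in a formula. -/
def nrel : SLR Rel ar Pr pa → ℕ
  | .rel _ _ => 1
  | .star φ ψ => φ.nrel + ψ.nrel
  | .ex _ φ => φ.nrel
  | _ => 0

/-- The set of relation symbols occurring in a formula. -/
def rels : SLR Rel ar Pr pa → Set Rel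
  | .rel r _ => {r}
  | .star φ ψ => φ.rels ∪ ψ.rels
  | .ex _ φ => φ.rels
  | _ => ∅

/-- The set of predicate symbols occurring in a formula. -/
def preds : SLR Rel ar Pr pa → Set Pr
  | .pred A _ => {A}
  | .star φ ψ => φ.preds ∪ ψ.preds
  | .ex _ φ => φ.preds
  | _ => ∅

/-- The quantifier-free matrix of a formula (erasing all existential quantifiers). -/
def matrix : SLR Rel ar Pr pa → SLR Rel ar Pr pa
  | .ex _ φ => φ.matrix
  | .star φ ψ => .star φ.matrix ψ.matrix
  | φ => φ

/-- The list of bound variables of a formula. -/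
def binders : SLR Rel ar Pr pa → List ℕ
  | .ex x φ => x :: φ.binders
  | .star φ ψ => φ.binders ++ ψ.binders
  | _ => []

/-- A formula is well-named iff its bound variables are pairwise distinct and distinct
from its free variables.  For a well-named formula, the matrix faithfully represents
the prenex form. -/
def WellNamed (χ : SLR Rel ar Pr pa) : Prop :=
  χ.binders.Nodup ∧ ∀ x ∈ χ.binders, x ∉ χ.fv

/-- The disequality `x ≠ y` occurs in the formula (as an unordered pair). -/
def neOccurs : SLR Rel ar Pr pa → ℕ → ℕ → Prop
  | .ne a b, x, y => (a = x ∧ b = y) ∨ (a = y ∧ b = x)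
  | .star φ ψ, x, y => φ.neOccurs x y ∨ ψ.neOccurs x y
  | .ex _ φ, x, y => φ.neOccurs x y
  | _, _, _ => False

/-- The equality `x = y` occurs in the formula (as an unordered pair). -/
def eqOccurs : SLR Rel ar Pr pa → ℕ → ℕ → Prop
  | .eq a b, x, y => (a = x ∧ b = y) ∨ (a = y ∧ b = x)
  | .star φ ψ, x, y => φ.eqOccurs x y ∨ ψ.eqOccurs x y
  | .ex _ φ, x, y => φ.eqOccurs x y
  | _, _, _ => False

end SLR

/-- The nullary predicate atom `A()` (the arguments are irrelevant when `pa A = 0`). -/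
def natom (A : Pr) : SLR Rel ar Pr pa := .pred A fun _ => 0

/-- Iterated separating conjunction: `starAll φ [χ1, …, χn] = χ1 * (χ2 * … * (χn * φ))`. -/
def starAll (φ : SLR Rel ar Pr pa) : List (SLR Rel ar Pr pa) → SLR Rel ar Pr pa
  | [] => φ
  | χ :: l => .star χ (starAll φ l)

end Defs1

/-- A set of inductive definitions (SID): a finite set of rules `A(0,…,pa A - 1) ← φ`
where the free variables of `φ` are among the parameters `0, …, pa A - 1`. -/
structure SID (Rel : Type) (ar : Rel → ℕ) (Pr : Type) (pa : Pr → ℕ) where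
  rules : Pr → Set (SLR Rel ar Pr pa)
  finite_rules : {p : Pr × SLR Rel ar Pr pa | p.2 ∈ rules p.1}.Finite
  wf : ∀ A, ∀ φ ∈ rules A, SLR.fv φ ⊆ {x | x < pa A}

section Defs2

variable {Rel : Type} {ar : Rel → ℕ} {V : Type} {Pr : Type} {pa : Pr → ℕ}

/-- The empty structure predicate. -/
def EmpS (S : Str Rel ar V) : Prop := ∀ r, S.interp r = ∅

/-- The satisfaction relation of SLR, parameterized by a store and an SID.
A predicate atom `A(y₁,…,yₙ)` is satisfied iff the body of some rule for `A` is
satisfied under the store mapping the parameter `i` to the value of `yᵢ₊₁`. -/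
inductive Sat (Δ : SID Rel ar Pr pa) :
    Str Rel ar V → (ℕ → V) → SLR Rel ar Pr pa → Prop where
  | emp {S : Str Rel ar V} {s : ℕ → V} : EmpS S → Sat Δ S s .emp
  | eq {S : Str Rel ar V} {s : ℕ → V} {x y : ℕ} :
      EmpS S → s x = s y → Sat Δ S s (.eq x y)
  | ne {S : Str Rel ar V} {s : ℕ → V} {x y : ℕ} :
      EmpS S → s x ≠ s y → Sat Δ S s (.ne x y)
  | rel {S : Str Rel ar V} {s : ℕ → V} {r : Rel} {a : Fin (ar r) → ℕ} :
      S.interp r = {fun i => s (a i)} → (∀ r', r' ≠ r → S.interp r' = ∅) →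
      Sat Δ S s (.rel r a)
  | pred {S : Str Rel ar V} {s : ℕ → V} {A : Pr} {a : Fin (pa A) → ℕ}
      {body : SLR Rel ar Pr pa} :
      body ∈ Δ.rules A →
      Sat Δ S (fun n => if h : n < pa A then s (a ⟨n, h⟩) else s n) body →
      Sat Δ S s (.pred A a)
  | star {S1 S2 : Str Rel ar V} {s : ℕ → V} {φ ψ : SLR Rel ar Pr pa} :
      LocDisj S1 S2 → Sat Δ S1 s φ → Sat Δ S2 s ψ →
      Sat Δ (S1.comp S2) s (.star φ ψ)
  | ex {S : Str Rel ar V} {s : ℕ → V} {x : ℕ} {φ : SLR Rel ar Pr pa} (u : V) :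
      Sat Δ S (Function.update s x u) φ → Sat Δ S s (.ex x φ)

/-- The set of `Δ`-models of a sentence (over universe `V`). -/
def SMod (Δ : SID Rel ar Pr pa) (φ : SLR Rel ar Pr pa) : Set (Str Rel ar V) :=
  { S | ∃ s : ℕ → V, Sat Δ S s φ }

/-- `IsSubst f φ φ'` holds iff `φ'` is obtained from `φ` by the capture-avoiding
substitution of `f x` for each free variable `x`, the bound variables being renamed
to avoid clashes. -/
inductive IsSubst : (ℕ → ℕ) → SLR Rel ar Pr pa → SLR Rel ar Pr pa → Prop where
  | emp {f : ℕ → ℕ} : IsSubst f .emp .emp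
  | eq {f : ℕ → ℕ} {x y : ℕ} : IsSubst f (.eq x y) (.eq (f x) (f y))
  | ne {f : ℕ → ℕ} {x y : ℕ} : IsSubst f (.ne x y) (.ne (f x) (f y))
  | rel {f : ℕ → ℕ} {r : Rel} {a : Fin (ar r) → ℕ} :
      IsSubst f (.rel r a) (.rel r (f ∘ a))
  | pred {f : ℕ → ℕ} {A : Pr} {a : Fin (pa A) → ℕ} :
      IsSubst f (.pred A a) (.pred A (f ∘ a))
  | star {f : ℕ → ℕ} {φ ψ φ' ψ' : SLR Rel ar Pr pa} :
      IsSubst f φ φ' → IsSubst f ψ ψ' → IsSubst f (.star φ ψ) (.star φ' ψ')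
  | ex {f : ℕ → ℕ} {x z : ℕ} {φ φ' : SLR Rel ar Pr pa} :
      (∀ y ∈ SLR.fv φ, y ≠ x → f y ≠ z) →
      IsSubst (Function.update f x z) φ φ' →
      IsSubst f (.ex x φ) (.ex z φ')

/-- One unfolding step: replace one predicate atom `A(y₁,…,yₙ)` by the body of a rule
for `A`, with the parameters substituted by `y₁,…,yₙ` (bound variables renamed to
avoid clashes). -/
inductive Step (Δ : SID Rel ar Pr pa) : SLR Rel ar Pr pa → SLR Rel ar Pr pa → Prop where
  | unfold {A : Pr} {a : Fin (pa A) → ℕ} {body ψ : SLR Rel ar Pr pa} :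
      body ∈ Δ.rules A →
      IsSubst (fun n => if h : n < pa A then a ⟨n, h⟩ else n) body ψ →
      Step Δ (.pred A a) ψ
  | starL {φ φ' ψ : SLR Rel ar Pr pa} : Step Δ φ φ' → Step Δ (.star φ ψ) (.star φ' ψ)
  | starR {φ ψ ψ' : SLR Rel ar Pr pa} : Step Δ ψ ψ' → Step Δ (.star φ ψ) (.star φ ψ')
  | exC {x : ℕ} {φ φ' : SLR Rel ar Pr pa} : Step Δ φ φ' → Step Δ (.ex x φ) (.ex x φ')

/-- `Δ`-unfolding: the reflexive-transitive closure of unfolding steps. -/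
def Unfolds (Δ : SID Rel ar Pr pa) : SLR Rel ar Pr pa → SLR Rel ar Pr pa → Prop :=
  Relation.ReflTransGen (Step Δ)

/-- `x = y` is a logical consequence of `ψ`. -/
def EqConseq (Δ : SID Rel ar Pr pa) (ψ : SLR Rel ar Pr pa) (x y : ℕ) : Prop :=
  ∀ (S : Str Rel ar V) (s : ℕ → V), Sat Δ S s ψ → s x = s y

/-- A store is canonical for `ψ` iff it identifies only variables that are equated as a
logical consequence of `ψ`. -/
def CanonicalStore (Δ : SID Rel ar Pr pa) (s : ℕ → V) (ψ : SLR Rel ar Pr pa) : Prop :=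
  ∀ x ∈ ψ.fv, ∀ y ∈ ψ.fv, s x = s y → EqConseq (V := V) Δ ψ x y

/-- `(S, d)` is a rich canonical `Δ`-model of `φ`: for some complete `Δ`-unfolding of
`φ` into a well-named predicate-free formula `χ` (i.e. of the form `∃x⃗.ψ` with `ψ` qpf,
up to hoisting of quantifiers) and some store canonical for the matrix `ψ`, the
structure `S` satisfies `ψ` and `d` records the disequalities of `ψ` under the store. -/
def RichCanonical (Δ : SID Rel ar Pr pa) (φ : SLR Rel ar Pr pa)
    (S : Str Rel ar V) (d : V → V → Prop) : Prop :=
  ∃ χ : SLR Rel ar Pr pa, Unfolds Δ φ χ ∧ χ.PredFree ∧ χ.WellNamed ∧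
    ∃ s : ℕ → V, CanonicalStore Δ s χ.matrix ∧ Sat Δ S s χ.matrix ∧
      ∀ u v : V, d u v ↔ ∃ x y : ℕ, s x = u ∧ s y = v ∧ χ.matrix.neOccurs x y

/-- The set of canonical `Δ`-models of `φ`. -/
def Canonical (Δ : SID Rel ar Pr pa) (φ : SLR Rel ar Pr pa) : Set (Str Rel ar V) :=
  { S | ∃ d, RichCanonical Δ φ S d }

/-- `S1` is a substructure of `S2`: its interpretation consists exactly of the tuples of
`S2` all of whose elements belong to the support of `S1`. -/
def Substr (S1 S2 : Str Rel ar V) : Prop :=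
  ∀ r, S1.interp r = { t ∈ S2.interp r | ∀ i, t i ∈ S1.supp }

/-- Two elements touch iff they occur in a common tuple. -/
def Touching (S : Str Rel ar V) (u v : V) : Prop :=
  ∃ (r : Rel) (t : Fin (ar r) → V), t ∈ S.interp r ∧ (∃ i, t i = u) ∧ ∃ j, t j = v

/-- A structure is connected iff any two support elements are joined by a path of
pairwise overlapping tuples. -/
def ConnectedS (S : Str Rel ar V) : Prop :=
  ∀ u ∈ S.supp, ∀ v ∈ S.supp, Relation.ReflTransGen (Touching S) u v

/-- `S1` is a maximally connected substructure of `S2`. -/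
def MaxConn (S1 S2 : Str Rel ar V) : Prop :=
  Substr S1 S2 ∧ ConnectedS S1 ∧
    ∀ S1' : Str Rel ar V, Substr S1' S2 → ConnectedS S1' → Substr S1 S1' → S1 = S1'

/-- The set of maximally connected substructures of a structure. -/
def split (S : Str Rel ar V) : Set (Str Rel ar V) := { S' | MaxConn S' S }

/-- `split`, lifted to sets of structures. -/
def splitSet (𝒮 : Set (Str Rel ar V)) : Set (Str Rel ar V) := ⋃ S ∈ 𝒮, split S

/-- The smallest equivalence relation containing `R`. -/
def EqvOf (R : V → V → Prop) (a b : V) : Prop :=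
  ∀ E : V → V → Prop, Equivalence E → (∀ x y, R x y → E x y) → E a b

/-- An equivalence relation is compatible with a structure iff any two distinct tuples of
the interpretation of a relation symbol differ at some position modulo the relation. -/
def CompatibleE (S : Str Rel ar V) (E : V → V → Prop) : Prop :=
  ∀ r, ∀ t1 ∈ S.interp r, ∀ t2 ∈ S.interp r, t1 ≠ t2 → ∃ i, ¬ E (t1 i) (t2 i)

/-- The image of a structure under a map on elements. -/
def mapStr (h : V → V) (S : Str Rel ar V) : Str Rel ar V where
  interp r := (fun t => h ∘ t) '' S.interp r
  finite_interp r := (S.finite_interp r).image _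
  finite_active := by
    refine S.finite_active.subset ?_
    intro r hr
    simp only [Set.mem_setOf_eq, ne_eq] at hr ⊢
    intro h0
    exact hr (by rw [h0, Set.image_empty])

/-- `S'` is (a copy over `V` of) the quotient of `S` by the equivalence relation `E`. -/
def QuotBy (S : Str Rel ar V) (E : V → V → Prop) (S' : Str Rel ar V) : Prop :=
  ∃ h : V → V, (∀ u ∈ S.supp, ∀ v ∈ S.supp, (E u v ↔ h u = h v)) ∧ S' = mapStr h S

/-- `S'` is an isomorphic copy of `S` (over the same universe `V`). -/
def IsoCopy (S S' : Str Rel ar V) : Prop :=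
  ∃ h : V → V, Set.InjOn h S.supp ∧ S' = mapStr h S

/-- A matching: a set of pairs such that distinct pairs share no element. -/
def IsMatching (M : Set (V × V)) : Prop :=
  ∀ p ∈ M, ∀ q ∈ M, p ≠ q → ({p.1, p.2} ∩ {q.1, q.2} : Set V) = ∅

/-- The set of internal fusions of a structure: quotients by compatible equivalence
relations (up to isomorphism). -/
def IntFusion (S : Str Rel ar V) : Set (Str Rel ar V) :=
  { S' | ∃ E : V → V → Prop, Equivalence E ∧ CompatibleE S E ∧ QuotBy S E S' }

/-- Internal fusions of members of a set of structures. -/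
def ifSet (𝒮 : Set (Str Rel ar V)) : Set (Str Rel ar V) := ⋃ S ∈ 𝒮, IntFusion S

/-- Internal fusions of a rich canonical model: quotients by compatible equivalence
relations that do not violate the disequality relation `d`. -/
def SIntFusion (S : Str Rel ar V) (d : V → V → Prop) : Set (Str Rel ar V) :=
  { S' | ∃ E : V → V → Prop, Equivalence E ∧ CompatibleE S E ∧
      (∀ u v, d u v → ¬ E u v) ∧ QuotBy S E S' }

/-- External fusions of two structures: quotients of the composition of disjoint
isomorphic copies by the smallest equivalence relation containing a nonempty matching
between supports that is compatible with the composition. -/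
def ExtFusion (S1 S2 : Str Rel ar V) : Set (Str Rel ar V) :=
  { S' | ∃ (S1' S2' : Str Rel ar V) (M : Set (V × V)),
      IsoCopy S1 S1' ∧ IsoCopy S2 S2' ∧ S1'.supp ∩ S2'.supp = ∅ ∧
      M.Nonempty ∧ IsMatching M ∧ (∀ p ∈ M, p.1 ∈ S1'.supp ∧ p.2 ∈ S2'.supp) ∧
      CompatibleE (S1'.comp S2') (EqvOf fun a b => (a, b) ∈ M) ∧
      QuotBy (S1'.comp S2') (EqvOf fun a b => (a, b) ∈ M) S' }

/-- Single-pair external fusions: external fusions whose matching is a single pair. -/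
def ExtFusion1 (S1 S2 : Str Rel ar V) : Set (Str Rel ar V) :=
  { S' | ∃ (S1' S2' : Str Rel ar V) (M : Set (V × V)),
      IsoCopy S1 S1' ∧ IsoCopy S2 S2' ∧ S1'.supp ∩ S2'.supp = ∅ ∧
      (∃ p : V × V, M = {p}) ∧ IsMatching M ∧
      (∀ p ∈ M, p.1 ∈ S1'.supp ∧ p.2 ∈ S2'.supp) ∧
      CompatibleE (S1'.comp S2') (EqvOf fun a b => (a, b) ∈ M) ∧
      QuotBy (S1'.comp S2') (EqvOf fun a b => (a, b) ∈ M) S' }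

/-- Closure of a set of structures under external fusions (structures being identified
up to isomorphism). -/
inductive efStar (𝒮 : Set (Str Rel ar V)) : Str Rel ar V → Prop where
  | base {S : Str Rel ar V} : S ∈ 𝒮 → efStar 𝒮 S
  | iso {S S' : Str Rel ar V} : efStar 𝒮 S → IsoCopy S S' → efStar 𝒮 S'
  | fuse {S1 S2 S : Str Rel ar V} :
      efStar 𝒮 S1 → efStar 𝒮 S2 → S ∈ ExtFusion S1 S2 → efStar 𝒮 S

def efStarSet (𝒮 : Set (Str Rel ar V)) : Set (Str Rel ar V) := { S | efStar 𝒮 S }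

/-- Closure of a set of structures under single-pair external fusions. -/
inductive ef1Star (𝒮 : Set (Str Rel ar V)) : Str Rel ar V → Prop where
  | base {S : Str Rel ar V} : S ∈ 𝒮 → ef1Star 𝒮 S
  | iso {S S' : Str Rel ar V} : ef1Star 𝒮 S → IsoCopy S S' → ef1Star 𝒮 S'
  | fuse {S1 S2 S : Str Rel ar V} :
      ef1Star 𝒮 S1 → ef1Star 𝒮 S2 → S ∈ ExtFusion1 S1 S2 → ef1Star 𝒮 S

def ef1StarSet (𝒮 : Set (Str Rel ar V)) : Set (Str Rel ar V) := { S | ef1Star 𝒮 S }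

/-- Closure of a set of structures under both internal and external fusions. -/
inductive iefStar (𝒮 : Set (Str Rel ar V)) : Str Rel ar V → Prop where
  | base {S : Str Rel ar V} : S ∈ 𝒮 → iefStar 𝒮 S
  | iso {S S' : Str Rel ar V} : iefStar 𝒮 S → IsoCopy S S' → iefStar 𝒮 S'
  | fuse {S1 S2 S : Str Rel ar V} :
      iefStar 𝒮 S1 → iefStar 𝒮 S2 → S ∈ ExtFusion S1 S2 → iefStar 𝒮 S
  | intf {S1 S : Str Rel ar V} : iefStar 𝒮 S1 → S ∈ IntFusion S1 → iefStar 𝒮 S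

def iefStarSet (𝒮 : Set (Str Rel ar V)) : Set (Str Rel ar V) := { S | iefStar 𝒮 S }

/-- The color of an element: the set of relation symbols whose interpretation contains
the constant tuple at this element. -/
def color (S : Str Rel ar V) (u : V) : Set Rel :=
  { r : Rel | (fun _ => u) ∈ S.interp r }

/-- The multiplicity of a color in the multiset color abstraction of a structure. -/
noncomputable def colorMult (S : Str Rel ar V) (C : Set Rel) : ℕ :=
  {u ∈ S.supp | color S u = C}.ncard

/-- The `k`-multiset color abstraction of a structure: the sub-multisets of cardinality
at most `k` of the multiset of colors of its support elements. -/
noncomputable def MkOf (k : ℕ) (S : Str Rel ar V) : Set (Multiset (Set Rel)) :=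
  { M | Multiset.card M ≤ k ∧
      ∀ C : Set Rel, @Multiset.count _ (Classical.decEq _) C M ≤ colorMult S C }

/-- The `k`-multiset color abstraction, lifted to sets of structures. -/
noncomputable def MkSet (k : ℕ) (𝒮 : Set (Str Rel ar V)) : Set (Multiset (Set Rel)) :=
  ⋃ S ∈ 𝒮, MkOf k S

/-- A set of structures conforms to an RGB color scheme iff (1) in any member, if some
support element has a red color then all other support elements have blue colors, and
(2) in any external fusion of members, every green color occurs at most twice. -/
def Conforms (𝒮 : Set (Str Rel ar V)) (P : RGB Rel) : Prop :=
  (∀ S ∈ 𝒮, ∀ u ∈ S.supp, color S u ∈ P.red →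
      ∀ v ∈ S.supp, v ≠ u → color S v ∈ P.blue) ∧
  (∀ S ∈ efStarSet 𝒮, ∀ C ∈ P.green, colorMult S C ≤ 2)

/-- Type `R` structures: only blue and red colors, with exactly one red element. -/
def TypeR (P : RGB Rel) (S : Str Rel ar V) : Prop :=
  (∀ u ∈ S.supp, color S u ∈ P.blue ∨ color S u ∈ P.red) ∧
  {u ∈ S.supp | color S u ∈ P.red}.ncard = 1

/-- Type `G` structures: only blue and green colors, with at least one green element. -/
def TypeG (P : RGB Rel) (S : Str Rel ar V) : Prop :=
  (∀ u ∈ S.supp, color S u ∈ P.blue ∨ color S u ∈ P.green) ∧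
  {u ∈ S.supp | color S u ∈ P.green}.Nonempty

/-- Type `B` structures: only blue colors. -/
def TypeB (P : RGB Rel) (S : Str Rel ar V) : Prop :=
  ∀ u ∈ S.supp, color S u ∈ P.blue

namespace SID

/-- The set of predicate symbols occurring in an SID. -/
def predsOf (Δ : SID Rel ar Pr pa) : Set Pr :=
  {A | Δ.rules A ≠ ∅} ∪ ⋃ A, ⋃ φ ∈ Δ.rules A, SLR.preds φ

/-- The set of relation symbols occurring in an SID. -/
def relsOf (Δ : SID Rel ar Pr pa) : Set Rel :=
  ⋃ A, ⋃ φ ∈ Δ.rules A, SLR.rels φ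

/-- The number of predicate symbols occurring in an SID. -/
noncomputable def Pcount (Δ : SID Rel ar Pr pa) : ℕ := Δ.predsOf.ncard

/-- The number of relation symbols occurring in an SID. -/
noncomputable def Rcount (Δ : SID Rel ar Pr pa) : ℕ := Δ.relsOf.ncard

/-- The maximum number of variables (free or existentially quantified) occurring in a
rule of the SID. -/
noncomputable def maxvar (Δ : SID Rel ar Pr pa) : ℕ :=
  sSup { n | ∃ A, ∃ φ ∈ Δ.rules A, n = ({x | x < pa A} ∪ SLR.vars φ).ncard }

/-- The maximum number of predicate atoms occurring in a rule of the SID. -/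
noncomputable def maxpredatoms (Δ : SID Rel ar Pr pa) : ℕ :=
  sSup { n | ∃ A, ∃ φ ∈ Δ.rules A, n = SLR.npred φ }

/-- The maximum number of relation atoms occurring in a rule of the SID. -/
noncomputable def maxrelatoms (Δ : SID Rel ar Pr pa) : ℕ :=
  sSup { n | ∃ A, ∃ φ ∈ Δ.rules A, n = SLR.nrel φ }

/-- The maximum arity of a relation symbol occurring in the SID. -/
noncomputable def maxrelarity (Δ : SID Rel ar Pr pa) : ℕ :=
  sSup { n | ∃ r ∈ Δ.relsOf, n = ar r }

/-- The maximum arity of a predicate symbol occurring in the SID. -/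
noncomputable def maxpredarity (Δ : SID Rel ar Pr pa) : ℕ :=
  sSup { n | ∃ A ∈ Δ.predsOf, n = pa A }

/-- An SID is equality-free iff all its rules are equality-free. -/
def EqFree (Δ : SID Rel ar Pr pa) : Prop :=
  ∀ A, ∀ φ ∈ Δ.rules A, SLR.EqFreeF φ

end SID

/-- An SID is all-satisfiable for a nullary predicate `A` iff every predicate-free
outcome of a complete unfolding of `A` is satisfiable. -/
def AllSat (Δ : SID Rel ar Pr pa) (A : Pr) : Prop :=
  ∀ χ : SLR Rel ar Pr pa, Unfolds Δ (natom A) χ → χ.PredFree →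
    ∃ (S : Str Rel ar V) (s : ℕ → V), Sat Δ S s χ

/-- An SID is expandable for a nullary predicate `A`: any finite family of pairwise
disjoint canonical models embeds, as a substructure, into a rich canonical model, in a
way that neither disequalities nor overlapping tuples connect two distinct members. -/
def Expandable (Δ : SID Rel ar Pr pa) (A : Pr) : Prop :=
  ∀ (n : ℕ) (Ss : Fin n → Str Rel ar V),
    (∀ i, Ss i ∈ Canonical (V := V) Δ (natom A)) →
    (∀ i j, i ≠ j → (Ss i).supp ∩ (Ss j).supp = ∅) →
    ∃ (S : Str Rel ar V) (d : V → V → Prop),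
      RichCanonical Δ (natom A) S d ∧
      Substr (bigComp Ss) S ∧
      (∀ i j : Fin n, i < j → ∀ u ∈ (Ss i).supp, ∀ v ∈ (Ss j).supp, ¬ d u v) ∧
      ¬ ∃ (r : Rel) (t1 t2 : Fin (ar r) → V) (i j : Fin n),
          t1 ∈ S.interp r ∧ t2 ∈ S.interp r ∧ i < j ∧
          (∃ k, t1 k ∈ (Ss i).supp) ∧ (∃ k, t2 k ∈ (Ss j).supp) ∧ ∃ k l, t1 k = t2 l

/-- The set of structures obtained by internal fusion of rich canonical `Δ`-models. -/
def sifSet (Δ : SID Rel ar Pr pa) (φ : SLR Rel ar Pr pa) : Set (Str Rel ar V) :=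
  { S' | ∃ (S : Str Rel ar V) (d : V → V → Prop),
      RichCanonical Δ φ S d ∧ S' ∈ SIntFusion S d }

end Defs2

end SLRTW

namespace SLRTW

section Aux

variable {Rel : Type} {ar : Rel → ℕ} {V : Type}

theorem Str.ext' {S S' : Str Rel ar V} (h : S.interp = S'.interp) : S = S' := by
  cases S; cases S'; simp_all

lemma mem_supp_of_mem {S : Str Rel ar V} {r : Rel} {t : Fin (ar r) → V}
    (ht : t ∈ S.interp r) (i : Fin (ar r)) : t i ∈ S.supp :=
  ⟨r, t, ht, i, rfl⟩

lemma supp_comp (S1 S2 : Str Rel ar V) : (S1.comp S2).supp = S1.supp ∪ S2.supp := by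
  ext u
  constructor
  · rintro ⟨r, t, ht, i, rfl⟩
    rcases ht with h | h
    · exact Or.inl ⟨r, t, h, i, rfl⟩
    · exact Or.inr ⟨r, t, h, i, rfl⟩
  · rintro (⟨r, t, ht, i, rfl⟩ | ⟨r, t, ht, i, rfl⟩)
    · exact ⟨r, t, Or.inl ht, i, rfl⟩
    · exact ⟨r, t, Or.inr ht, i, rfl⟩

lemma supp_mapStr (h : V → V) (S : Str Rel ar V) :
    (mapStr h S).supp = h '' S.supp := by
  ext u
  constructor
  · rintro ⟨r, t', ⟨t, ht, rfl⟩, i, rfl⟩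
    exact ⟨t i, mem_supp_of_mem ht i, rfl⟩
  · rintro ⟨v, ⟨r, t, ht, i, rfl⟩, rfl⟩
    exact ⟨r, h ∘ t, ⟨t, ht, rfl⟩, i, rfl⟩

lemma supp_finite (S : Str Rel ar V) : S.supp.Finite := by
  have hsub : S.supp ⊆ ⋃ r ∈ {r | S.interp r ≠ ∅}, ⋃ t ∈ S.interp r, Set.range t := by
    rintro u ⟨r, t, ht, i, rfl⟩
    refine Set.mem_biUnion ?_ (Set.mem_biUnion ht ⟨i, rfl⟩)
    simp only [Set.mem_setOf_eq]
    intro h0; rw [h0] at ht; exact ht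
  exact (Set.Finite.biUnion S.finite_active fun r _ =>
    Set.Finite.biUnion (S.finite_interp r) fun t _ => Set.finite_range t).subset hsub

lemma mapStr_id (S : Str Rel ar V) : mapStr id S = S := by
  apply Str.ext'; funext r
  show (fun t : Fin (ar r) → V => id ∘ t) '' S.interp r = S.interp r
  rw [show (fun t : Fin (ar r) → V => id ∘ t) = id from rfl, Set.image_id]

lemma isoCopy_refl (S : Str Rel ar V) : IsoCopy S S :=
  ⟨id, Set.injOn_id _, (mapStr_id S).symm⟩

lemma const_mem_mapStr {h : V → V} {S : Str Rel ar V} {r : Rel} {v : V} :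
    ((fun _ => v) ∈ (mapStr h S).interp r) ↔ ∃ t ∈ S.interp r, ∀ i, h (t i) = v := by
  constructor
  · rintro ⟨t, ht, heq⟩
    exact ⟨t, ht, fun i => congrFun heq i⟩
  · rintro ⟨t, ht, heq⟩
    exact ⟨t, ht, funext heq⟩

lemma color_mapStr_injOn {h : V → V} {S : Str Rel ar V} (hinj : Set.InjOn h S.supp)
    {u : V} (hu : u ∈ S.supp) : color (mapStr h S) (h u) = color S u := by
  ext r
  simp only [color, Set.mem_setOf_eq, const_mem_mapStr]
  constructor
  · rintro ⟨t, ht, hti⟩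
    have ht' : t = fun _ => u := funext fun i => hinj (mem_supp_of_mem ht i) hu (hti i)
    rwa [ht'] at ht
  · intro hconst; exact ⟨_, hconst, fun _ => rfl⟩

lemma eqvOf_contains {R : V → V → Prop} {a b : V} (h : R a b) : EqvOf R a b :=
  fun _ _ hR => hR _ _ h

lemma IsMatching.eq_of_shared {M : Set (V × V)} (hM : IsMatching M) {p q : V × V}
    (hp : p ∈ M) (hq : q ∈ M) {v : V} (hvp : v = p.1 ∨ v = p.2)
    (hvq : v = q.1 ∨ v = q.2) : p = q := by
  by_contra hne
  have hemp := hM p hp q hq hne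
  have hvmem : v ∈ ({p.1, p.2} ∩ {q.1, q.2} : Set V) := by
    constructor
    · rcases hvp with h | h <;> simp [h]
    · rcases hvq with h | h <;> simp [h]
  rw [hemp] at hvmem
  exact hvmem

lemma eqvOf_matching {M : Set (V × V)} (hM : IsMatching M) (a b : V) :
    EqvOf (fun a b => (a, b) ∈ M) a b ↔ a = b ∨ (a, b) ∈ M ∨ (b, a) ∈ M := by
  constructor
  · intro hE
    refine hE (fun a b => a = b ∨ (a, b) ∈ M ∨ (b, a) ∈ M)
      ⟨fun x => Or.inl rfl, ?_, ?_⟩ (fun x y hxy => Or.inr (Or.inl hxy))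
    · rintro x y (rfl | h | h)
      · exact Or.inl rfl
      · exact Or.inr (Or.inr h)
      · exact Or.inr (Or.inl h)
    · rintro x y z (rfl | h1 | h1) h2
      · exact h2
      · rcases h2 with rfl | h2 | h2
        · exact Or.inr (Or.inl h1)
        · -- (x,y) ∈ M, (y,z) ∈ M
          have := hM.eq_of_shared h1 h2 (v := y) (Or.inr rfl) (Or.inl rfl)
          have hx : x = y := congrArg Prod.fst this
          have hy : y = z := congrArg Prod.snd this
          exact Or.inl (hx.trans hy)
        · -- (x,y) ∈ M, (z,y) ∈ M
          have := hM.eq_of_shared h1 h2 (v := y) (Or.inr rfl) (Or.inr rfl)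
          exact Or.inl (congrArg Prod.fst this)
      · rcases h2 with rfl | h2 | h2
        · exact Or.inr (Or.inr h1)
        · -- (y,x) ∈ M, (y,z) ∈ M
          have := hM.eq_of_shared h1 h2 (v := y) (Or.inl rfl) (Or.inl rfl)
          exact Or.inl (congrArg Prod.snd this)
        · -- (y,x) ∈ M, (z,y) ∈ M
          have := hM.eq_of_shared h1 h2 (v := y) (Or.inl rfl) (Or.inr rfl)
          have hyz : y = z := congrArg Prod.fst this
          have hxy : x = y := congrArg Prod.snd this
          exact Or.inl (hxy.trans hyz)
  · rintro (rfl | hab | hba)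
    · exact fun E hE _ => hE.refl a
    · exact fun E hE hR => hR _ _ hab
    · exact fun E hE hR => hE.symm (hR _ _ hba)

end Aux

section Quot

variable {Rel : Type} {ar : Rel → ℕ} {V : Type}
variable {A B : Str Rel ar V} {M : Set (V × V)} {h : V → V}

/-- helper: a constant tuple in the interpretation puts the element in the support. -/
lemma const_mem_supp (har : ∀ r, 1 ≤ ar r) {S : Str Rel ar V} {r : Rel} {v : V}
    (hv : (fun _ => v) ∈ S.interp r) : v ∈ S.supp :=
  mem_supp_of_mem hv ⟨0, har r⟩

lemma disj_forall (hAB : A.supp ∩ B.supp = ∅) :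
    ∀ u, u ∈ A.supp → u ∈ B.supp → False := by
  intro u hA hB
  have : u ∈ A.supp ∩ B.supp := ⟨hA, hB⟩
  rw [hAB] at this
  exact this

section QuotColor

variable (har : ∀ r, 1 ≤ ar r)
variable (hAB : A.supp ∩ B.supp = ∅) (hM : IsMatching M)
  (hMp : ∀ p ∈ M, p.1 ∈ A.supp ∧ p.2 ∈ B.supp)
  (hh : ∀ u ∈ (A.comp B).supp, ∀ v ∈ (A.comp B).supp,
    (EqvOf (fun a b => (a, b) ∈ M) u v ↔ h u = h v))

include har hAB hM hMp hh

lemma quot_color_A_unmatched {z : V} (hz : z ∈ A.supp)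
    (hun : ∀ p ∈ M, z ≠ p.1) :
    color (mapStr h (A.comp B)) (h z) = color A z := by
  have hzC : z ∈ (A.comp B).supp := by rw [supp_comp]; exact Or.inl hz
  ext r
  simp only [color, Set.mem_setOf_eq, const_mem_mapStr]
  constructor
  · rintro ⟨t, ht, hti⟩
    have htconst : ∀ i, t i = z := by
      intro i
      have htiC : t i ∈ (A.comp B).supp := mem_supp_of_mem ht i
      have hE := (hh _ htiC _ hzC).mpr (hti i)
      rcases (eqvOf_matching hM _ _).mp hE with heq | hmem | hmem
      · exact heq
      · exact absurd ((hMp _ hmem).2) (fun hB => disj_forall hAB z hz hB)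
      · exact absurd rfl (hun _ hmem)
    have ht' : t = fun _ => z := funext htconst
    rw [ht'] at ht
    rcases ht with hA | hB
    · exact hA
    · exact absurd (const_mem_supp har hB) (fun hB' => disj_forall hAB z hz hB')
  · intro hc
    exact ⟨_, Or.inl hc, fun _ => rfl⟩

lemma quot_color_B_unmatched {z : V} (hz : z ∈ B.supp)
    (hun : ∀ p ∈ M, z ≠ p.2) :
    color (mapStr h (A.comp B)) (h z) = color B z := by
  have hzC : z ∈ (A.comp B).supp := by rw [supp_comp]; exact Or.inr hz
  ext r
  simp only [color, Set.mem_setOf_eq, const_mem_mapStr]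
  constructor
  · rintro ⟨t, ht, hti⟩
    have htconst : ∀ i, t i = z := by
      intro i
      have htiC : t i ∈ (A.comp B).supp := mem_supp_of_mem ht i
      have hE := (hh _ htiC _ hzC).mpr (hti i)
      rcases (eqvOf_matching hM _ _).mp hE with heq | hmem | hmem
      · exact heq
      · exact absurd rfl (hun _ hmem)
      · exact absurd ((hMp _ hmem).1) (fun hA => disj_forall hAB z hA hz)
    have ht' : t = fun _ => z := funext htconst
    rw [ht'] at ht
    rcases ht with hA | hB
    · exact absurd (const_mem_supp har hA) (fun hA' => disj_forall hAB z hA' hz)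
    · exact hB
  · intro hc
    exact ⟨_, Or.inr hc, fun _ => rfl⟩

lemma quot_color_matched {p : V × V} (hp : p ∈ M) :
    color (mapStr h (A.comp B)) (h p.1) = color A p.1 ∪ color B p.2 := by
  have hp1A : p.1 ∈ A.supp := (hMp _ hp).1
  have hp2B : p.2 ∈ B.supp := (hMp _ hp).2
  have hp1C : p.1 ∈ (A.comp B).supp := by rw [supp_comp]; exact Or.inl hp1A
  have hp2C : p.2 ∈ (A.comp B).supp := by rw [supp_comp]; exact Or.inr hp2B
  have h12 : h p.1 = h p.2 :=
    (hh _ hp1C _ hp2C).mp ((eqvOf_matching hM _ _).mpr (Or.inr (Or.inl hp)))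
  ext r
  simp only [color, Set.mem_setOf_eq, const_mem_mapStr, Set.mem_union]
  constructor
  · rintro ⟨t, ht, hti⟩
    have htmem : ∀ i, t i = p.1 ∨ t i = p.2 := by
      intro i
      have htiC : t i ∈ (A.comp B).supp := mem_supp_of_mem ht i
      have hE := (hh _ htiC _ hp1C).mpr (hti i)
      rcases (eqvOf_matching hM _ _).mp hE with heq | hmem | hmem
      · exact Or.inl heq
      · exact absurd ((hMp _ hmem).2) (fun hB => disj_forall hAB p.1 hp1A hB)
      · have := hM.eq_of_shared hmem hp (v := p.1) (Or.inl rfl) (Or.inl rfl)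
        exact Or.inr (by rw [← this])
    rcases ht with hA | hB
    · left
      have ht' : t = fun _ => p.1 := by
        funext i
        rcases htmem i with h1 | h2
        · exact h1
        · exact absurd (h2 ▸ mem_supp_of_mem hA i)
            (fun hB' => disj_forall hAB p.2 hB' hp2B)
      rwa [ht'] at hA
    · right
      have ht' : t = fun _ => p.2 := by
        funext i
        rcases htmem i with h1 | h2
        · exact absurd (h1 ▸ mem_supp_of_mem hB i)
            (fun hB' => disj_forall hAB p.1 hp1A hB')
        · exact h2
      rwa [ht'] at hB
  · rintro (hc | hc)
    · exact ⟨_, Or.inl hc, fun _ => rfl⟩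
    · exact ⟨_, Or.inr hc, fun i => h12.symm⟩

end QuotColor

/-- Colors of matched elements are disjoint, by compatibility. -/
lemma matched_color_disjoint (har : ∀ r, 1 ≤ ar r)
    (hAB : A.supp ∩ B.supp = ∅) (hMp : ∀ p ∈ M, p.1 ∈ A.supp ∧ p.2 ∈ B.supp)
    (hcompat : CompatibleE (A.comp B) (EqvOf fun a b => (a, b) ∈ M))
    {p : V × V} (hp : p ∈ M) : color A p.1 ∩ color B p.2 = ∅ := by
  rw [Set.eq_empty_iff_forall_notMem]
  rintro r ⟨hr1, hr2⟩
  have hne : p.1 ≠ p.2 := fun heq =>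
    disj_forall hAB p.1 (hMp _ hp).1 (heq ▸ (hMp _ hp).2)
  have htne : (fun _ : Fin (ar r) => p.1) ≠ (fun _ => p.2) := fun heq =>
    hne (congrFun heq ⟨0, har r⟩)
  obtain ⟨i, hi⟩ := hcompat r _ (Or.inl hr1) _ (Or.inr hr2) htne
  exact hi (eqvOf_contains hp)

/-- Compatibility of a single-pair fusion, given disjoint colors. -/
lemma compat_single (har : ∀ r, 1 ≤ ar r)
    (hAB : A.supp ∩ B.supp = ∅) {x y : V} (hx : x ∈ A.supp) (hy : y ∈ B.supp)
    (hcol : color A x ∩ color B y = ∅) :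
    CompatibleE (A.comp B) (EqvOf fun a b => (a, b) ∈ ({(x, y)} : Set (V × V))) := by
  have hM1 : IsMatching ({(x, y)} : Set (V × V)) := by
    rintro p hp q hq hne
    simp only [Set.mem_singleton_iff] at hp hq
    exact absurd (hp.trans hq.symm) hne
  intro r t1 ht1 t2 ht2 hne
  by_contra hall
  push_neg at hall
  have hE : ∀ i, t1 i = t2 i ∨ (t1 i = x ∧ t2 i = y) ∨ (t1 i = y ∧ t2 i = x) := by
    intro i
    rcases (eqvOf_matching hM1 (t1 i) (t2 i)).mp (hall i) with heq | hm | hm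
    · exact Or.inl heq
    · simp only [Set.mem_singleton_iff, Prod.mk.injEq] at hm
      exact Or.inr (Or.inl hm)
    · simp only [Set.mem_singleton_iff, Prod.mk.injEq] at hm
      exact Or.inr (Or.inr ⟨hm.2, hm.1⟩)
  have hsideA : ∀ {t : Fin (ar r) → V}, t ∈ A.interp r → ∀ i, t i ∈ A.supp :=
    fun ht i => mem_supp_of_mem ht i
  have hsideB : ∀ {t : Fin (ar r) → V}, t ∈ B.interp r → ∀ i, t i ∈ B.supp :=
    fun ht i => mem_supp_of_mem ht i
  rcases ht1 with h1 | h1 <;> rcases ht2 with h2 | h2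
  · -- both in A
    apply hne; funext i
    rcases hE i with heq | ⟨_, h2y⟩ | ⟨h1y, _⟩
    · exact heq
    · exact absurd (h2y ▸ hsideA h2 i) (fun hB => disj_forall hAB y hB hy)
    · exact absurd (h1y ▸ hsideA h1 i) (fun hB => disj_forall hAB y hB hy)
  · -- t1 in A, t2 in B
    have hc : ∀ i, t1 i = x ∧ t2 i = y := by
      intro i
      rcases hE i with heq | hxy | ⟨h1y, _⟩
      · exact absurd (heq ▸ hsideA h1 i) (fun hA => disj_forall hAB (t2 i) hA (hsideB h2 i))
      · exact hxy
      · exact absurd (h1y ▸ hsideA h1 i) (fun hB => disj_forall hAB y hB hy)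
    have e1 : t1 = fun _ => x := funext fun i => (hc i).1
    have e2 : t2 = fun _ => y := funext fun i => (hc i).2
    rw [e1] at h1; rw [e2] at h2
    have : r ∈ color A x ∩ color B y := ⟨h1, h2⟩
    rw [hcol] at this; exact this
  · -- t1 in B, t2 in A
    have hc : ∀ i, t1 i = y ∧ t2 i = x := by
      intro i
      rcases hE i with heq | ⟨h1x, _⟩ | hyx
      · exact absurd (heq ▸ hsideB h1 i) (fun hB => disj_forall hAB (t2 i) (hsideA h2 i) hB)
      · exact absurd (h1x ▸ hsideB h1 i) (fun hB => disj_forall hAB x hx hB)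
      · exact hyx
    have e1 : t1 = fun _ => y := funext fun i => (hc i).1
    have e2 : t2 = fun _ => x := funext fun i => (hc i).2
    rw [e1] at h1; rw [e2] at h2
    have : r ∈ color A x ∩ color B y := ⟨h2, h1⟩
    rw [hcol] at this; exact this
  · -- both in B
    apply hne; funext i
    rcases hE i with heq | ⟨h1x, _⟩ | ⟨_, h2x⟩
    · exact heq
    · exact absurd (h1x ▸ hsideB h1 i) (fun hB => disj_forall hAB x hx hB)
    · exact absurd (h2x ▸ hsideB h2 i) (fun hB => disj_forall hAB x hx hB)

/-- Existence of a "fresh" injective copy map avoiding a finite set. -/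
lemma exists_fresh [Infinite V] (A B : Set V) (hA : A.Finite) (hB : B.Finite) :
    ∃ h : V → V, Set.InjOn h B ∧ ∀ b ∈ B, h b ∉ A := by
  have hAc : (Aᶜ : Set V).Infinite := hA.infinite_compl
  have : Infinite ↥(Aᶜ : Set V) := hAc.to_subtype
  have : Finite ↥B := hB
  obtain ⟨f, hf⟩ := Countable.exists_injective_nat ↥B
  let e := Infinite.natEmbedding ↥(Aᶜ : Set V)
  classical
  refine ⟨fun v => if hv : v ∈ B then (e (f ⟨v, hv⟩)).1 else v, ?_, ?_⟩
  · intro b hb b' hb' heq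
    simp only [dif_pos hb, dif_pos hb'] at heq
    have := e.injective (Subtype.ext heq)
    have := hf this
    exact congrArg Subtype.val this
  · intro b hb
    simp only [dif_pos hb]
    exact (e (f ⟨b, hb⟩)).2

end Quot

section Step

variable {Rel : Type} {ar : Rel → ℕ} {V : Type}

lemma step_fusion [Infinite V] (har : ∀ r, 1 ≤ ar r) {𝒮 : Set (Str Rel ar V)}
    {T T2 : Str Rel ar V} (hT : ef1Star 𝒮 T) (hT2 : ef1Star 𝒮 T2)
    {x y : V} (hx : x ∈ T.supp) (hy : y ∈ T2.supp)
    (hdisj : color T x ∩ color T2 y = ∅) :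
    ∃ T' : Str Rel ar V, ef1Star 𝒮 T' ∧ ∃ g j : V → V,
      Set.InjOn g T.supp ∧ Set.InjOn j T2.supp ∧
      (∀ a ∈ T.supp, g a ∈ T'.supp) ∧ (∀ b ∈ T2.supp, j b ∈ T'.supp) ∧
      (∀ a ∈ T.supp, ∀ b ∈ T2.supp, (g a = j b ↔ a = x ∧ b = y)) ∧
      (∀ a ∈ T.supp, a ≠ x → color T' (g a) = color T a) ∧
      color T' (g x) = color T x ∪ color T2 y ∧
      (∀ b ∈ T2.supp, b ≠ y → color T' (j b) = color T2 b) := by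
  classical
  obtain ⟨h2, h2inj, h2fresh⟩ := exists_fresh T.supp T2.supp (supp_finite T) (supp_finite T2)
  set B := mapStr h2 T2 with hBdef
  have hBsupp : B.supp = h2 '' T2.supp := supp_mapStr h2 T2
  have hAB : T.supp ∩ B.supp = ∅ := by
    rw [Set.eq_empty_iff_forall_notMem]
    rintro u ⟨huT, huB⟩
    rw [hBsupp] at huB
    obtain ⟨b, hb, rfl⟩ := huB
    exact h2fresh b hb huT
  set y' := h2 y with hy'def
  have hy'B : y' ∈ B.supp := by rw [hBsupp]; exact ⟨y, hy, rfl⟩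
  have hxy' : x ≠ y' := fun heq => disj_forall hAB x hx (heq ▸ hy'B)
  have hcolB : color B y' = color T2 y := color_mapStr_injOn h2inj hy
  set M : Set (V × V) := {(x, y')} with hMdef
  have hM : IsMatching M := by
    rintro p hp q hq hne
    simp only [hMdef, Set.mem_singleton_iff] at hp hq
    exact absurd (hp.trans hq.symm) hne
  have hMp : ∀ p ∈ M, p.1 ∈ T.supp ∧ p.2 ∈ B.supp := by
    rintro p hp
    simp only [hMdef, Set.mem_singleton_iff] at hp
    subst hp
    exact ⟨hx, hy'B⟩
  have hcol' : color T x ∩ color B y' = ∅ := by rw [hcolB]; exact hdisj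
  have hcompat : CompatibleE (T.comp B) (EqvOf fun a b => (a, b) ∈ M) :=
    compat_single har hAB hx hy'B hcol'
  set hq : V → V := fun z => if z = y' then x else z with hqdef
  have hqy' : hq y' = x := by simp [hqdef]
  have hqother : ∀ z, z ≠ y' → hq z = z := fun z hz => by simp [hqdef, hz]
  have hh : ∀ u ∈ (T.comp B).supp, ∀ v ∈ (T.comp B).supp,
      (EqvOf (fun a b => (a, b) ∈ M) u v ↔ hq u = hq v) := by
    intro u _ v _
    rw [eqvOf_matching hM]
    constructor
    · rintro (rfl | hm | hm)
      · rfl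
      · simp only [hMdef, Set.mem_singleton_iff, Prod.mk.injEq] at hm
        rw [hm.1, hm.2, hqy', hqother x hxy']
      · simp only [hMdef, Set.mem_singleton_iff, Prod.mk.injEq] at hm
        rw [hm.1, hm.2, hqy', hqother x hxy']
    · intro heq
      by_cases hu : u = y' <;> by_cases hv : v = y'
      · exact Or.inl (hu.trans hv.symm)
      · rw [hu, hqy', hqother v hv] at heq
        refine Or.inr (Or.inr ?_)
        simp only [hMdef, Set.mem_singleton_iff, Prod.mk.injEq]
        exact ⟨heq.symm, hu⟩
      · rw [hv, hqy', hqother u hu] at heq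
        refine Or.inr (Or.inl ?_)
        simp only [hMdef, Set.mem_singleton_iff, Prod.mk.injEq]
        exact ⟨heq, hv⟩
      · rw [hqother u hu, hqother v hv] at heq
        exact Or.inl heq
  set T' := mapStr hq (T.comp B) with hT'def
  have hT'mem : ef1Star 𝒮 T' := by
    refine ef1Star.fuse hT hT2 ⟨T, B, M, isoCopy_refl T, ⟨h2, h2inj, rfl⟩, hAB,
      ⟨(x, y'), rfl⟩, hM, hMp, hcompat, ⟨hq, hh, rfl⟩⟩
  have hsuppT' : T'.supp = hq '' (T.supp ∪ B.supp) := by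
    rw [hT'def, supp_mapStr, supp_comp]
  refine ⟨T', hT'mem, id, fun b => hq (h2 b), Set.injOn_id _, ?_, ?_, ?_, ?_, ?_, ?_, ?_⟩
  · -- InjOn j
    intro b hb b' hb' heq
    change hq (h2 b) = hq (h2 b') at heq
    by_cases h1 : h2 b = y' <;> by_cases h2' : h2 b' = y'
    · exact h2inj hb hb' (h1.trans h2'.symm)
    · rw [h1, hqy', hqother _ h2'] at heq
      exact absurd (hBsupp ▸ ⟨b', hb', heq.symm⟩ : x ∈ B.supp)
        (fun hB => disj_forall hAB x hx hB)
    · rw [h2', hqy', hqother _ h1] at heq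
      exact absurd (hBsupp ▸ ⟨b, hb, heq⟩ : x ∈ B.supp)
        (fun hB => disj_forall hAB x hx hB)
    · exact h2inj hb hb' ((hqother _ h1) ▸ (hqother _ h2') ▸ heq)
  · -- g a ∈ supp
    intro a ha
    rw [hsuppT']
    have hay' : a ≠ y' := fun heq => disj_forall hAB a ha (heq ▸ hy'B)
    exact ⟨a, Or.inl ha, hqother a hay'⟩
  · -- j b ∈ supp
    intro b hb
    rw [hsuppT']
    exact ⟨h2 b, Or.inr (hBsupp ▸ ⟨b, hb, rfl⟩), rfl⟩
  · -- iff
    intro a ha b hb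
    simp only [id]
    by_cases hby : b = y
    · subst hby
      rw [hqy']
      constructor
      · intro h; exact ⟨h, rfl⟩
      · rintro ⟨rfl, -⟩; rfl
    · have hb2 : h2 b ≠ y' := fun heq => hby (h2inj hb hy heq)
      rw [hqother _ hb2]
      constructor
      · intro heq
        exact absurd (hBsupp ▸ ⟨b, hb, heq.symm⟩ : a ∈ B.supp)
          (fun hB => disj_forall hAB a ha hB)
      · rintro ⟨-, h⟩; exact absurd h hby
  · -- colors preserved on T side
    intro a ha hax
    have hay' : a ≠ y' := fun heq => disj_forall hAB a ha (heq ▸ hy'B)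
    have hun : ∀ p ∈ M, a ≠ p.1 := by
      rintro p hp
      simp only [hMdef, Set.mem_singleton_iff] at hp
      subst hp
      exact hax
    have := quot_color_A_unmatched har hAB hM hMp hh ha hun
    rwa [hqother a hay'] at this
  · -- merged color
    have hp : ((x, y') : V × V) ∈ M := rfl
    have := quot_color_matched har hAB hM hMp hh hp
    simp only at this
    rw [show (id x : V) = hq x from (hqother x hxy').symm, this, hcolB]
  · -- colors preserved on T2 side
    intro b hb hby
    have hb2 : h2 b ≠ y' := fun heq => hby (h2inj hb hy heq)
    have hbB : h2 b ∈ B.supp := hBsupp ▸ ⟨b, hb, rfl⟩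
    have hun : ∀ p ∈ M, h2 b ≠ p.2 := by
      rintro p hp
      simp only [hMdef, Set.mem_singleton_iff] at hp
      subst hp
      exact hb2
    have := quot_color_B_unmatched har hAB hM hMp hh hbB hun
    rw [this]
    exact color_mapStr_injOn h2inj hb

end Step

section Key

variable {Rel : Type} {ar : Rel → ℕ} {V : Type}

theorem key_embed [Infinite V] (har : ∀ r, 1 ≤ ar r) {𝒮 : Set (Str Rel ar V)}
    {S : Str Rel ar V} (hS : efStar 𝒮 S) :
    ∃ T, ef1Star 𝒮 T ∧ ∃ G : V → V, Set.InjOn G S.supp ∧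
      ∀ u ∈ S.supp, G u ∈ T.supp ∧ color T (G u) = color S u := by
  induction hS with
  | base h => exact ⟨_, ef1Star.base h, id, Set.injOn_id _, fun u hu => ⟨hu, rfl⟩⟩
  | @iso S0 S' h1 h2 IH =>
    obtain ⟨T, hT, G, hGinj, hG⟩ := IH
    obtain ⟨h, hinj, rfl⟩ := h2
    have hsupp : (mapStr h S0).supp = h '' S0.supp := supp_mapStr h S0
    have hinvmem : ∀ w ∈ (mapStr h S0).supp,
        Function.invFunOn h S0.supp w ∈ S0.supp ∧ h (Function.invFunOn h S0.supp w) = w := by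
      intro w hw
      rw [hsupp] at hw
      obtain ⟨z, hz, rfl⟩ := hw
      exact ⟨Function.invFunOn_mem ⟨z, hz, rfl⟩, Function.invFunOn_eq ⟨z, hz, rfl⟩⟩
    refine ⟨T, hT, fun w => G (Function.invFunOn h S0.supp w), ?_, ?_⟩
    · intro w hw w' hw' heq
      have m1 := hinvmem w hw
      have m2 := hinvmem w' hw'
      have := hGinj m1.1 m2.1 heq
      rw [← m1.2, ← m2.2, this]
    · intro w hw
      have m1 := hinvmem w hw
      have hcol : color (mapStr h S0) w = color S0 (Function.invFunOn h S0.supp w) := by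
        conv_lhs => rw [← m1.2]
        exact color_mapStr_injOn hinj m1.1
      rw [hcol]
      exact hG _ m1.1
  | @fuse S1 S2 S0 h1 h2 h3 IH1 IH2 =>
    classical
    obtain ⟨T1, hT1, G1, hG1inj, hG1⟩ := IH1
    obtain ⟨T2, hT2, G2, hG2inj, hG2⟩ := IH2
    obtain ⟨A, B, M, ⟨f1, f1inj, rfl⟩, ⟨f2, f2inj, rfl⟩, hAB, hMne, hM, hMp,
      hcompat, hbig, hbigprop, rfl⟩ := h3
    set A := mapStr f1 S1 with hAdef
    set B := mapStr f2 S2 with hBdef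
    have hAsupp : A.supp = f1 '' S1.supp := supp_mapStr f1 S1
    have hBsupp : B.supp = f2 '' S2.supp := supp_mapStr f2 S2
    -- M is finite
    have hMfstinj : Set.InjOn Prod.fst M := by
      intro p hp q hq heq
      exact hM.eq_of_shared hp hq (v := p.1) (Or.inl rfl) (Or.inl heq)
    have hMfin : M.Finite := by
      have himg : (Prod.fst '' M) ⊆ A.supp := by
        rintro _ ⟨p, hp, rfl⟩; exact (hMp p hp).1
      exact Set.Finite.of_finite_image ((supp_finite A).subset himg) hMfstinj
    -- designated preimages of matched points
    set aP : V × V → V := fun p => Function.invFunOn f1 S1.supp p.1 with haPdef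
    set bP : V × V → V := fun p => Function.invFunOn f2 S2.supp p.2 with hbPdef
    set xP : V × V → V := fun p => G1 (aP p) with hxPdef
    set yP : V × V → V := fun p => G2 (bP p) with hyPdef
    have haP : ∀ p ∈ M, aP p ∈ S1.supp ∧ f1 (aP p) = p.1 := by
      intro p hp
      have : p.1 ∈ f1 '' S1.supp := hAsupp ▸ (hMp p hp).1
      obtain ⟨a, ha, heq⟩ := this
      exact ⟨Function.invFunOn_mem ⟨a, ha, heq⟩, Function.invFunOn_eq ⟨a, ha, heq⟩⟩
    have hbP : ∀ p ∈ M, bP p ∈ S2.supp ∧ f2 (bP p) = p.2 := by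
      intro p hp
      have : p.2 ∈ f2 '' S2.supp := hBsupp ▸ (hMp p hp).2
      obtain ⟨b, hb, heq⟩ := this
      exact ⟨Function.invFunOn_mem ⟨b, hb, heq⟩, Function.invFunOn_eq ⟨b, hb, heq⟩⟩
    have hxPmem : ∀ p ∈ M, xP p ∈ T1.supp := fun p hp => (hG1 _ (haP p hp).1).1
    have hyPmem : ∀ p ∈ M, yP p ∈ T2.supp := fun p hp => (hG2 _ (hbP p hp).1).1
    have hxPcol : ∀ p ∈ M, color T1 (xP p) = color A p.1 := by
      intro p hp
      have e1 := (hG1 _ (haP p hp).1).2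
      have e2 := color_mapStr_injOn f1inj (haP p hp).1
      simp only [hxPdef]
      rw [e1, ← e2, (haP p hp).2]
    have hyPcol : ∀ p ∈ M, color T2 (yP p) = color B p.2 := by
      intro p hp
      have e1 := (hG2 _ (hbP p hp).1).2
      have e2 := color_mapStr_injOn f2inj (hbP p hp).1
      simp only [hyPdef]
      rw [e1, ← e2, (hbP p hp).2]
    have hxPinj : ∀ p ∈ M, ∀ q ∈ M, xP p = xP q → p = q := by
      intro p hp q hq heq
      simp only [hxPdef] at heq
      have ha := hG1inj (haP p hp).1 (haP q hq).1 heq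
      have hfst : p.1 = q.1 := by rw [← (haP p hp).2, ← (haP q hq).2, ha]
      exact hMfstinj hp hq hfst
    have hpaircol : ∀ p ∈ M, color A p.1 ∩ color B p.2 = ∅ := fun p hp =>
      matched_color_disjoint har hAB hMp hcompat hp
    obtain ⟨p1, hp1⟩ := hMne
    -- the chain of single-pair fusions
    have chain : ∀ F : Finset (V × V), ↑F ⊆ M →
        ∃ (T : Str Rel ar V) (φ ψ : V → V), ef1Star 𝒮 T ∧
          Set.InjOn φ T1.supp ∧ Set.InjOn ψ T2.supp ∧
          (∀ a ∈ T1.supp, φ a ∈ T.supp) ∧ (∀ b ∈ T2.supp, ψ b ∈ T.supp) ∧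
          (∀ a ∈ T1.supp, ∀ b ∈ T2.supp, (φ a = ψ b ↔ a = xP p1 ∧ b = yP p1)) ∧
          (∀ p ∈ insert p1 F, color T (φ (xP p)) = color A p.1 ∪ color B p.2) ∧
          (∀ u ∈ T1.supp, (∀ p ∈ insert p1 F, u ≠ xP p) →
            color T (φ u) = color T1 u) ∧
          (∀ b ∈ T2.supp, b ≠ yP p1 → color T (ψ b) = color T2 b) := by
      intro F
      induction F using Finset.induction_on with
      | empty =>
        intro _
        obtain ⟨T', hT', g, j, hginj, hjinj, hgmem, hjmem, hiff, hgpres, hgmerge, hjpres⟩ :=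
          step_fusion har hT1 hT2 (hxPmem p1 hp1) (hyPmem p1 hp1)
            (by rw [hxPcol p1 hp1, hyPcol p1 hp1]; exact hpaircol p1 hp1)
        refine ⟨T', g, j, hT', hginj, hjinj, hgmem, hjmem, hiff, ?_, ?_, hjpres⟩
        · intro p hp
          simp only [Finset.mem_insert, Finset.notMem_empty, or_false] at hp
          rw [hp, hgmerge, hxPcol p1 hp1, hyPcol p1 hp1]
        · intro u hu hun
          exact hgpres u hu (hun p1 (by simp))
      | @insert q F hqF IHF =>
        intro hsub
        have hFsub : ↑F ⊆ M := fun p hp =>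
          hsub (Finset.mem_coe.mpr (Finset.mem_insert_of_mem hp))
        have hqM : q ∈ M := hsub (by simp)
        obtain ⟨T, φ, ψ, hT, hφinj, hψinj, hφmem, hψmem, hiff, hproc, hunproc, hψcol⟩ :=
          IHF hFsub
        by_cases hq1 : q = p1
        · subst hq1
          rw [Finset.insert_idem]
          exact ⟨T, φ, ψ, hT, hφinj, hψinj, hφmem, hψmem, hiff, hproc, hunproc, hψcol⟩
        · have hxne : ∀ p ∈ insert p1 F, xP q ≠ xP p := by
            intro p hp heq
            have hpM : p ∈ M := by
              rcases Finset.mem_insert.mp hp with h' | hp'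
              · exact h' ▸ hp1
              · exact hFsub hp'
            have hqp : q = p := hxPinj q hqM p hpM heq
            rcases Finset.mem_insert.mp hp with h' | hp'
            · exact hq1 (hqp.trans h')
            · exact hqF (by rwa [← hqp] at hp')
          have hcolq : color T (φ (xP q)) = color T1 (xP q) :=
            hunproc _ (hxPmem q hqM) hxne
          obtain ⟨T', hT', g, j, hginj, hjinj, hgmem, hjmem, hiff', hgpres, hgmerge, hjpres⟩ :=
            step_fusion har hT hT2 (hφmem _ (hxPmem q hqM)) (hyPmem q hqM)
              (by rw [hcolq, hxPcol q hqM, hyPcol q hqM]; exact hpaircol q hqM)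
          refine ⟨T', fun a => g (φ a), fun b => g (ψ b), hT', ?_, ?_, ?_, ?_, ?_, ?_, ?_, ?_⟩
          · intro a ha a' ha' heq
            exact hφinj ha ha' (hginj (hφmem a ha) (hφmem a' ha') heq)
          · intro b hb b' hb' heq
            exact hψinj hb hb' (hginj (hψmem b hb) (hψmem b' hb') heq)
          · intro a ha; exact hgmem _ (hφmem a ha)
          · intro b hb; exact hgmem _ (hψmem b hb)
          · intro a ha b hb
            rw [show (g (φ a) = g (ψ b)) ↔ (φ a = ψ b) from
              ⟨fun h => hginj (hφmem a ha) (hψmem b hb) h, fun h => by rw [h]⟩]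
            exact hiff a ha b hb
          · intro p hp
            by_cases hpq : p = q
            · subst hpq
              rw [hgmerge, hcolq, hxPcol p hqM, hyPcol p hqM]
            · have hp' : p ∈ insert p1 F := by
                rcases Finset.mem_insert.mp hp with h' | h'
                · rw [h']; exact Finset.mem_insert_self p1 F
                · rcases Finset.mem_insert.mp h' with h'' | h''
                  · exact absurd h'' hpq
                  · exact Finset.mem_insert_of_mem h''
              have hpM : p ∈ M := by
                rcases Finset.mem_insert.mp hp' with h' | h'
                · exact h' ▸ hp1
                · exact hFsub h'
              have hne : φ (xP p) ≠ φ (xP q) := by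
                intro heq
                exact hxne p hp' (hφinj (hxPmem q hqM) (hxPmem p hpM) heq.symm)
              rw [hgpres _ (hφmem _ (hxPmem p hpM)) hne]
              exact hproc p hp'
          · intro u hu hun
            have hune : φ u ≠ φ (xP q) := by
              intro heq
              exact hun q (Finset.mem_insert_of_mem (Finset.mem_insert_self q F))
                (hφinj hu (hxPmem q hqM) heq)
            rw [hgpres _ (hφmem u hu) hune]
            exact hunproc u hu fun p hp =>
              hun p (by
                rcases Finset.mem_insert.mp hp with rfl | h'
                · exact Finset.mem_insert_self p (insert q F)
                · exact Finset.mem_insert_of_mem (Finset.mem_insert_of_mem h'))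
          · intro b hb hbne
            have hne : ψ b ≠ φ (xP q) := by
              intro heq
              exact hbne ((hiff _ (hxPmem q hqM) b hb).mp heq.symm).2
            rw [hgpres _ (hψmem b hb) hne]
            exact hψcol b hb hbne
    obtain ⟨T, φ, ψ, hT, hφinj, hψinj, hφmem, hψmem, hiff, hproc, hunproc, hψcol⟩ :=
      chain hMfin.toFinset (by intro p hp; exact hMfin.mem_toFinset.mp hp)
    have hprocM : ∀ p ∈ M, color T (φ (xP p)) = color A p.1 ∪ color B p.2 := by
      intro p hp
      exact hproc p (Finset.mem_insert_of_mem (hMfin.mem_toFinset.mpr hp))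
    have hunprocM : ∀ u ∈ T1.supp, (∀ p ∈ M, u ≠ xP p) →
        color T (φ u) = color T1 u := by
      intro u hu hun
      refine hunproc u hu fun p hp => ?_
      rcases Finset.mem_insert.mp hp with h' | hp'
      · exact h' ▸ hun p1 hp1
      · exact hun p (hMfin.mem_toFinset.mp hp')
    set C := A.comp B with hCdef
    have hsuppS : (mapStr hbig C).supp = hbig '' (A.supp ∪ B.supp) := by
      rw [supp_mapStr, supp_comp]
    -- the embedding
    set G : V → V := fun w =>
      if hw : ∃ a ∈ S1.supp, hbig (f1 a) = w then φ (G1 hw.choose)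
      else if hw' : ∃ b ∈ S2.supp, hbig (f2 b) = w then ψ (G2 hw'.choose) else w
      with hGdef
    have hbr2exists : ∀ w ∈ (mapStr hbig C).supp,
        (¬ ∃ a ∈ S1.supp, hbig (f1 a) = w) → ∃ b ∈ S2.supp, hbig (f2 b) = w := by
      intro w hwS hna
      rw [hsuppS] at hwS
      obtain ⟨z, hz, rfl⟩ := hwS
      rcases hz with hzA | hzB
      · rw [hAsupp] at hzA
        obtain ⟨a, ha, rfl⟩ := hzA
        exact absurd ⟨a, ha, rfl⟩ hna
      · rw [hBsupp] at hzB
        obtain ⟨b, hb, rfl⟩ := hzB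
        exact ⟨b, hb, rfl⟩
    have hbr1 : ∀ (a0 w : V), a0 ∈ S1.supp → hbig (f1 a0) = w →
        φ (G1 a0) ∈ T.supp ∧
          color T (φ (G1 a0)) = color (mapStr hbig C) w := by
      intro a0 w ha0 heq0
      subst heq0
      refine ⟨hφmem _ (hG1 _ ha0).1, ?_⟩
      by_cases hmat : ∃ p ∈ M, p.1 = f1 a0
      · obtain ⟨p, hp, hpeq⟩ := hmat
        have haPp : aP p = a0 :=
          f1inj (haP p hp).1 ha0 (by rw [(haP p hp).2, hpeq])
        have hxp : xP p = G1 a0 := by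
          simp only [hxPdef]; rw [haPp]
        rw [← hpeq, quot_color_matched har hAB hM hMp hbigprop hp, ← hxp]
        exact hprocM p hp
      · push_neg at hmat
        have hun : ∀ p ∈ M, f1 a0 ≠ p.1 := fun p hp => (hmat p hp).symm
        have hxun : ∀ p ∈ M, G1 a0 ≠ xP p := by
          intro p hp heq
          simp only [hxPdef] at heq
          have := hG1inj ha0 (haP p hp).1 heq
          exact hun p hp (by rw [this, (haP p hp).2])
        rw [quot_color_A_unmatched har hAB hM hMp hbigprop
            (hAsupp ▸ ⟨a0, ha0, rfl⟩) hun,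
          hunprocM _ (hG1 _ ha0).1 hxun, (hG1 _ ha0).2,
          color_mapStr_injOn f1inj ha0]
    have hbr2 : ∀ (b0 w : V), (¬ ∃ a ∈ S1.supp, hbig (f1 a) = w) →
        b0 ∈ S2.supp → hbig (f2 b0) = w →
        ψ (G2 b0) ∈ T.supp ∧
          color T (ψ (G2 b0)) = color (mapStr hbig C) w := by
      intro b0 w hnb1 hb0 heq0
      subst heq0
      have hun : ∀ p ∈ M, f2 b0 ≠ p.2 := by
        intro p hp heq
        have hp1C : p.1 ∈ C.supp := by rw [hCdef, supp_comp]; exact Or.inl (hMp p hp).1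
        have hp2C : p.2 ∈ C.supp := by rw [hCdef, supp_comp]; exact Or.inr (hMp p hp).2
        have h12 : hbig p.1 = hbig p.2 :=
          (hbigprop _ hp1C _ hp2C).mp (eqvOf_contains hp)
        have : p.1 ∈ f1 '' S1.supp := hAsupp ▸ (hMp p hp).1
        obtain ⟨a, ha, haeq⟩ := this
        exact hnb1 ⟨a, ha, by rw [haeq, h12, ← heq]⟩
      have hyun : G2 b0 ≠ yP p1 := by
        intro heq
        simp only [hyPdef] at heq
        have := hG2inj hb0 (hbP p1 hp1).1 heq
        exact hun p1 hp1 (by rw [this, (hbP p1 hp1).2])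
      refine ⟨hψmem _ (hG2 _ hb0).1, ?_⟩
      rw [quot_color_B_unmatched har hAB hM hMp hbigprop
          (hBsupp ▸ ⟨b0, hb0, rfl⟩) hun,
        hψcol _ (hG2 _ hb0).1 hyun, (hG2 _ hb0).2,
        color_mapStr_injOn f2inj hb0]
    refine ⟨T, hT, G, ?_, ?_⟩
    · -- injectivity of G
      intro w hw w' hw' heq
      by_cases hb1 : ∃ a ∈ S1.supp, hbig (f1 a) = w <;>
        by_cases hb1' : ∃ a ∈ S1.supp, hbig (f1 a) = w'
      · rw [hGdef] at heq
        simp only [dif_pos hb1, dif_pos hb1'] at heq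
        have := hG1inj hb1.choose_spec.1 hb1'.choose_spec.1
          (hφinj (hG1 _ hb1.choose_spec.1).1 (hG1 _ hb1'.choose_spec.1).1 heq)
        rw [← hb1.choose_spec.2, ← hb1'.choose_spec.2, this]
      · have hb2' := hbr2exists w' hw' hb1'
        rw [hGdef] at heq
        simp only [dif_pos hb1, dif_neg hb1', dif_pos hb2'] at heq
        have hconj := (hiff _ (hG1 _ hb1.choose_spec.1).1 _ (hG2 _ hb2'.choose_spec.1).1).mp heq
        have ha : hb1.choose = aP p1 := by
          have := hconj.1
          simp only [hxPdef] at this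
          exact hG1inj hb1.choose_spec.1 (haP p1 hp1).1 this
        have hb : hb2'.choose = bP p1 := by
          have := hconj.2
          simp only [hyPdef] at this
          exact hG2inj hb2'.choose_spec.1 (hbP p1 hp1).1 this
        have hp1C : p1.1 ∈ C.supp := by rw [hCdef, supp_comp]; exact Or.inl (hMp p1 hp1).1
        have hp2C : p1.2 ∈ C.supp := by rw [hCdef, supp_comp]; exact Or.inr (hMp p1 hp1).2
        have h12 : hbig p1.1 = hbig p1.2 :=
          (hbigprop _ hp1C _ hp2C).mp (eqvOf_contains hp1)
        rw [← hb1.choose_spec.2, ← hb2'.choose_spec.2, ha, hb, (haP p1 hp1).2,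
          (hbP p1 hp1).2, h12]
      · have hb2 := hbr2exists w hw hb1
        rw [hGdef] at heq
        simp only [dif_neg hb1, dif_pos hb2, dif_pos hb1'] at heq
        have hconj := (hiff _ (hG1 _ hb1'.choose_spec.1).1 _ (hG2 _ hb2.choose_spec.1).1).mp heq.symm
        have ha : hb1'.choose = aP p1 := by
          have := hconj.1
          simp only [hxPdef] at this
          exact hG1inj hb1'.choose_spec.1 (haP p1 hp1).1 this
        have hb : hb2.choose = bP p1 := by
          have := hconj.2
          simp only [hyPdef] at this
          exact hG2inj hb2.choose_spec.1 (hbP p1 hp1).1 this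
        have hp1C : p1.1 ∈ C.supp := by rw [hCdef, supp_comp]; exact Or.inl (hMp p1 hp1).1
        have hp2C : p1.2 ∈ C.supp := by rw [hCdef, supp_comp]; exact Or.inr (hMp p1 hp1).2
        have h12 : hbig p1.1 = hbig p1.2 :=
          (hbigprop _ hp1C _ hp2C).mp (eqvOf_contains hp1)
        rw [← hb1'.choose_spec.2, ← hb2.choose_spec.2, ha, hb, (haP p1 hp1).2,
          (hbP p1 hp1).2, h12]
      · have hb2 := hbr2exists w hw hb1
        have hb2' := hbr2exists w' hw' hb1'
        rw [hGdef] at heq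
        simp only [dif_neg hb1, dif_neg hb1', dif_pos hb2, dif_pos hb2'] at heq
        have := hG2inj hb2.choose_spec.1 hb2'.choose_spec.1
          (hψinj (hG2 _ hb2.choose_spec.1).1 (hG2 _ hb2'.choose_spec.1).1 heq)
        rw [← hb2.choose_spec.2, ← hb2'.choose_spec.2, this]
    · -- membership and colors
      intro w hwS
      by_cases hb1 : ∃ a ∈ S1.supp, hbig (f1 a) = w
      · have hGw : G w = φ (G1 hb1.choose) := by rw [hGdef]; simp only [dif_pos hb1]
        rw [hGw]
        exact hbr1 _ w hb1.choose_spec.1 hb1.choose_spec.2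
      · have hb2 := hbr2exists w hwS hb1
        have hGw : G w = ψ (G2 hb2.choose) := by
          rw [hGdef]; simp only [dif_neg hb1, dif_pos hb2]
        rw [hGw]
        exact hbr2 _ w hb1 hb2.choose_spec.1 hb2.choose_spec.2

end Key

section Final

variable {Rel : Type} {ar : Rel → ℕ} {V : Type}

lemma ef1Star_efStar {𝒮 : Set (Str Rel ar V)} {S : Str Rel ar V}
    (h : ef1Star 𝒮 S) : efStar 𝒮 S := by
  induction h with
  | base h => exact efStar.base h
  | iso h1 h2 IH => exact efStar.iso IH h2
  | fuse h1 h2 h3 IH1 IH2 =>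
    refine efStar.fuse IH1 IH2 ?_
    obtain ⟨S1', S2', M, a1, a2, a3, ⟨p, hp⟩, a5, a6, a7, a8⟩ := h3
    exact ⟨S1', S2', M, a1, a2, a3, ⟨p, by rw [hp]; rfl⟩, a5, a6, a7, a8⟩

lemma colorMult_le {S T : Str Rel ar V} {G : V → V}
    (hGinj : Set.InjOn G S.supp)
    (hG : ∀ u ∈ S.supp, G u ∈ T.supp ∧ color T (G u) = color S u)
    (C : Set Rel) : colorMult S C ≤ colorMult T C := by
  have hsub : G '' {u ∈ S.supp | color S u = C} ⊆ {u ∈ T.supp | color T u = C} := by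
    rintro _ ⟨u, ⟨hu, hc⟩, rfl⟩
    exact ⟨(hG u hu).1, by rw [(hG u hu).2, hc]⟩
  have hfinT : {u ∈ T.supp | color T u = C}.Finite :=
    (supp_finite T).subset fun u hu => hu.1
  calc colorMult S C = (G '' {u ∈ S.supp | color S u = C}).ncard := by
        rw [Set.ncard_image_of_injOn (hGinj.mono fun u hu => hu.1)]
        rfl
    _ ≤ _ := Set.ncard_le_ncard hsub hfinT

end Final





end SLRTW

namespace SLRTW

/-- Lemma 3.26: for every set of structures and every `k ≥ 1`, the
`k`-multiset color abstraction of the closure under external fusions equals that of the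
closure under single-pair external fusions. -/
theorem reach_fusion_one
    (Rel : Type) [Fintype Rel] (ar : Rel → ℕ) (har : ∀ r, 1 ≤ ar r)
    (V : Type) [Infinite V] (𝒮 : Set (Str Rel ar V)) (k : ℕ) (hk : 1 ≤ k) :
    MkSet k (efStarSet 𝒮) = MkSet k (ef1StarSet 𝒮) := by
  apply Set.Subset.antisymm
  · intro m hm
    simp only [MkSet, Set.mem_iUnion] at hm ⊢
    obtain ⟨S, hS, hmS⟩ := hm
    obtain ⟨T, hT, G, hGinj, hG⟩ := key_embed har hS
    refine ⟨T, hT, ?_⟩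
    obtain ⟨hcard, hcount⟩ := hmS
    exact ⟨hcard, fun C => (hcount C).trans (colorMult_le hGinj hG C)⟩
  · intro m hm
    simp only [MkSet, Set.mem_iUnion] at hm ⊢
    obtain ⟨S, hS, hmS⟩ := hm
    exact ⟨S, ef1Star_efStar hS, hmS⟩

end SLRTW
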